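/- arXiv:1404.5743 — 3 statements merged into one kernel-verified Lean document; each statement's English description precedes it below -/
import Mathlib

section
/- If a data structure problem f : X × Y → Z has (s,w,t)-certificates with t ≤ s, then f has (binom(s,t), w·t, 1)-certificates, where binom(s,t) is the binomial coefficient s choose t. -/
/-- `f` has `(s,w,t)`-certificates: there is a code `T : Y → Σ^s` with alphabet
`Σ = {0,1}^w` such that for every query `x` and database `y` some set `P` of at
most `t` cells determines the answer `f (x, y)`. -/
def HasCertificates {X Y Z : Type*} (f : X × Y → Z) (s w t : ℕ) : Prop :=
  ∃ T : Y → Fin s → (Fin w → Bool),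
    ∀ x : X, ∀ y : Y, ∃ P : Finset (Fin s), P.card ≤ t ∧
      ∀ y' : Y, (∀ i ∈ P, T y' i = T y i) → f (x, y') = f (x, y)

/-!
Pad each certificate `P` to a `t`-subset `S ⊇ P` of the cells and store, in one new cell
indexed by `S`, the concatenation of the `t` old cells of `S` (listed in increasing order).
Probing that single cell reveals all of `S`, hence all of `P`.
-/

namespace Finset

variable {ι α : Type*} [LinearOrder ι] {w t : ℕ}

def packCells (S : { S : Finset ι // S.card = t }) (c : ι → Fin w → α) : Fin (w * t) → α :=
  fun j => c (S.1.orderEmbOfFin S.2 (finProdFinEquiv.symm j).2) (finProdFinEquiv.symm j).1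

theorem packCells_eq_packCells_iff (S : { S : Finset ι // S.card = t }) (c c' : ι → Fin w → α) :
    packCells S c = packCells S c' ↔ ∀ i ∈ S.1, c i = c' i := by
  constructor
  · intro h i hi
    obtain ⟨k, rfl⟩ : i ∈ Set.range (S.1.orderEmbOfFin S.2) := by
      rwa [range_orderEmbOfFin]
    funext a
    simpa [packCells] using congrFun h (finProdFinEquiv (a, k))
  · intro h
    funext j
    exact congrFun (h _ (orderEmbOfFin_mem _ S.2 _)) _

end Finset

theorem certificates_reduction_to_one_probe_general {X Y Z : Type*}
    (f : X × Y → Z) (s w t : ℕ) (hts : t ≤ s)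
    (hcert : HasCertificates f s w t) :
    HasCertificates f (s.choose t) (w * t) 1 := by
  obtain ⟨T, hT⟩ := hcert
  let e : { S : Finset (Fin s) // S.card = t } ≃ Fin (s.choose t) :=
    Fintype.equivFinOfCardEq (by simp)
  refine ⟨fun y c => Finset.packCells (e.symm c) (T y), fun x y => ?_⟩
  obtain ⟨P, hPcard, hP⟩ := hT x y
  obtain ⟨S, hPS, -, hS⟩ :=
    Finset.exists_subsuperset_card_eq P.subset_univ hPcard (by simpa using hts)
  refine ⟨{e ⟨S, hS⟩}, by simp, fun y' hcell => hP y' fun i hi => ?_⟩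
  have hpack := hcell _ (Finset.mem_singleton_self _)
  simp only [e.symm_apply_apply] at hpack
  exact (Finset.packCells_eq_packCells_iff _ _ _).1 hpack i (hPS hi)

/-- If `f` has `(s,w,t)`-certificates with `t ≤ s`, then `f` has
`(C(s,t), w·t, 1)`-certificates. -/
theorem certificates_reduction_to_one_probe {X Y Z : Type*} [Fintype X] [Fintype Y]
    (f : X × Y → Z) (s w t : ℕ) (hts : t ≤ s)
    (hcert : HasCertificates f s w t) :
    HasCertificates f (s.choose t) (w * t) 1 :=
  certificates_reduction_to_one_probe_general f s w t hts hcert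
end

section
/- Let f : X × Y → {0,1} be a problem on finite sets X and Y. Suppose f is (u,v)-rich (for positive reals u, v) and f has (s,w,t)-certificates with 1 ≤ t ≤ s. Then f contains a monochromatic 1-rectangle of size (u/binom(s,t)) × (v/(binom(s,t)·2^{w·t})), where binom(s,t) is the binomial coefficient s choose t. -/
/-!
Pad every certificate to exactly `t` cells. For each rich database `y`, pigeonholing its positive
queries by their certificate gives one set `P_y` of cells shared by `u / C(s,t)` of them. Pigeonholing
the rich databases by `P_y` and by the contents of the cells of `P_y` gives
`v / (C(s,t) · 2^{wt})` databases with the same `P` and the same contents on `P`. Every query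
certified by `P` for one of these databases is then positive for all of them.
-/

open Finset

/-- `f` is `(u,v)`-rich: at least `v` databases have at least `u` positive queries. -/
def IsRich {X Y : Type*} [Fintype X] (f : X × Y → Fin 2) (u v : ℝ) : Prop :=
  ∃ B : Finset Y, v ≤ (B.card : ℝ) ∧
    ∀ y ∈ B, u ≤ ((Finset.univ.filter fun x : X => f (x, y) = 1).card : ℝ)

/-- `f` contains a monochromatic 1-rectangle of size `a × b`. -/
def HasOneRectangle {X Y : Type*} (f : X × Y → Fin 2) (a b : ℝ) : Prop :=
  ∃ (A : Finset X) (B : Finset Y), a ≤ (A.card : ℝ) ∧ b ≤ (B.card : ℝ) ∧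
    ∀ x ∈ A, ∀ y ∈ B, f (x, y) = 1

theorem Finset.exists_div_card_le_card_fiber {α β : Type*} [DecidableEq β] [Fintype β]
    [Nonempty β] (s : Finset α) (g : α → β) :
    ∃ b, (#s : ℝ) / Fintype.card β ≤ #{a ∈ s | g a = b} := by
  obtain ⟨b, -, hb⟩ := exists_le_card_fiber_of_nsmul_le_card_of_maps_to
    (fun a _ => mem_univ (g a)) univ_nonempty (b := (#s : ℝ) / Fintype.card β)
    (by rw [card_univ, nsmul_eq_mul, mul_div_cancel₀ _ (by positivity)])
  exact ⟨b, hb⟩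

theorem HasCertificates.exists_card_eq {X Y Z : Type*} {f : X × Y → Z} {s w t : ℕ}
    (h : HasCertificates f s w t) (hts : t ≤ s) :
    ∃ (T : Y → Fin s → Fin w → Bool) (cert : X → Y → {P : Finset (Fin s) // #P = t}),
      ∀ x y y', (∀ i ∈ (cert x y).1, T y' i = T y i) → f (x, y') = f (x, y) := by
  obtain ⟨T, hT⟩ := h
  have padded : ∀ x y, ∃ P : {P : Finset (Fin s) // #P = t},
      ∀ y', (∀ i ∈ P.1, T y' i = T y i) → f (x, y') = f (x, y) := by
    intro x y
    obtain ⟨P, hPt, hP⟩ := hT x y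
    obtain ⟨Q, hPQ, hQt⟩ := exists_superset_card_eq hPt (by simpa using hts)
    exact ⟨⟨Q, hQt⟩, fun y' hy' => hP y' fun i hi => hy' i (hPQ hi)⟩
  choose cert hcert using padded
  exact ⟨T, cert, hcert⟩

theorem nonempty_finset_card_eq {ι : Type*} [Fintype ι] {t : ℕ} (ht : t ≤ Fintype.card ι) :
    Nonempty {P : Finset ι // #P = t} :=
  Fintype.card_pos_iff.mp (by simpa using Nat.choose_pos ht)

section Certificates

variable {X Y ι α : Type*} [Fintype ι] [DecidableEq ι] [Fintype α] [Nonempty α] {t : ℕ}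

theorem exists_large_subset_agreeing_on_certificate (B : Finset Y)
    (P : Y → {P : Finset ι // #P = t}) (T : Y → ι → α) (ht : t ≤ Fintype.card ι) :
    ∃ (P₀ : {P : Finset ι // #P = t}) (B' : Finset Y), B' ⊆ B ∧
      (#B : ℝ) / ((Fintype.card ι).choose t * Fintype.card α ^ t) ≤ #B' ∧
      ∀ y ∈ B', P y = P₀ ∧ ∀ y' ∈ B', ∀ i ∈ P₀.1, T y i = T y' i := by
  classical
  have := nonempty_finset_card_eq ht
  obtain ⟨P₀, hB₁⟩ := exists_div_card_le_card_fiber B P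
  obtain ⟨σ, hB₂⟩ := exists_div_card_le_card_fiber {y ∈ B | P y = P₀} fun y (i : P₀.1) => T y i
  set B₁ : Finset Y := {y ∈ B | P y = P₀}
  set B₂ : Finset Y := {y ∈ B₁ | (fun i : P₀.1 => T y i) = σ}
  refine ⟨P₀, B₂, (filter_subset _ _).trans (filter_subset _ _), ?_, fun y hy => ?_⟩
  · simp only [Fintype.card_finset_len, Fintype.card_pi, Fintype.card_coe, P₀.2,
      prod_const, card_univ] at hB₁ hB₂
    calc (#B : ℝ) / ((Fintype.card ι).choose t * Fintype.card α ^ t)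
        = #B / (Fintype.card ι).choose t / Fintype.card α ^ t := by rw [div_div]
      _ ≤ #B₁ / Fintype.card α ^ t := by gcongr
      _ ≤ #B₂ := by exact_mod_cast hB₂
  · obtain ⟨hy₁, hyσ⟩ := mem_filter.mp hy
    refine ⟨(mem_filter.mp hy₁).2, fun y' hy' i hi => ?_⟩
    exact congrFun (hyσ.trans (mem_filter.mp hy').2.symm) ⟨i, hi⟩

theorem IsRich.hasOneRectangle_of_certificates [Fintype X] {f : X × Y → Fin 2} {u v : ℝ}
    (hrich : IsRich f u v) (hv : 0 < v) (T : Y → ι → α)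
    (cert : X → Y → {P : Finset ι // #P = t})
    (hT : ∀ x y y', (∀ i ∈ (cert x y).1, T y' i = T y i) → f (x, y') = f (x, y))
    (ht : t ≤ Fintype.card ι) :
    HasOneRectangle f (u / (Fintype.card ι).choose t)
      (v / ((Fintype.card ι).choose t * Fintype.card α ^ t)) := by
  classical
  obtain ⟨B, hvB, hBu⟩ := hrich
  have := nonempty_finset_card_eq ht
  choose P hP using fun y => exists_div_card_le_card_fiber {x | f (x, y) = 1} (cert · y)
  obtain ⟨P₀, B', hB'B, hB', hagree⟩ := exists_large_subset_agreeing_on_certificate B P T ht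
  have hvB' : v / ((Fintype.card ι).choose t * Fintype.card α ^ t) ≤ #B' :=
    (div_le_div_of_nonneg_right hvB (by positivity)).trans hB'
  have hC : (0 : ℝ) < (Fintype.card ι).choose t := by exact_mod_cast Nat.choose_pos ht
  obtain ⟨y₀, hy₀⟩ : B'.Nonempty := card_pos.mp <| by
    exact_mod_cast (show 0 < v / ((Fintype.card ι).choose t * Fintype.card α ^ t) by
      positivity).trans_le hvB'
  refine ⟨({x | f (x, y₀) = 1 ∧ cert x y₀ = P₀} : Finset X), B', ?_, hvB', fun x hx y hy => ?_⟩
  · calc u / (Fintype.card ι).choose t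
        ≤ #{x | f (x, y₀) = 1} / (Fintype.card ι).choose t := by gcongr; exact hBu y₀ (hB'B hy₀)
      _ ≤ #{x ∈ {x | f (x, y₀) = 1} | cert x y₀ = P y₀} := by simpa using hP y₀
      _ = #{x | f (x, y₀) = 1 ∧ cert x y₀ = P₀} := by rw [filter_filter, (hagree y₀ hy₀).1]
  · obtain ⟨hfx, hcx⟩ := (mem_filter.mp hx).2
    rw [hT x y₀ y fun i hi => (hagree y hy).2 y₀ hy₀ i (hcx ▸ hi), hfx]

end Certificates

theorem richness_for_certificates_general {X Y : Type*} [Fintype X]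
    (f : X × Y → Fin 2) (u v : ℝ) (hv : 0 < v)
    (hrich : IsRich f u v) (s w t : ℕ) (hts : t ≤ s)
    (hcert : HasCertificates f s w t) :
    HasOneRectangle f (u / (s.choose t : ℝ)) (v / ((s.choose t : ℝ) * 2 ^ (w * t))) := by
  obtain ⟨T, cert, hT⟩ := hcert.exists_card_eq hts
  simpa [pow_mul, mul_comm] using
    hrich.hasOneRectangle_of_certificates hv T cert hT (by simpa using hts)

/-- Richness lemma for data structure certificates: if `f` is `(u,v)`-rich and has
`(s,w,t)`-certificates with `1 ≤ t ≤ s`, then `f` contains a monochromatic 1-rectangle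
of size `(u/C(s,t)) × (v/(C(s,t)·2^{w·t}))`. -/
theorem richness_for_certificates {X Y : Type*} [Fintype X] [Fintype Y]
    (f : X × Y → Fin 2) (u v : ℝ) (hu : 0 < u) (hv : 0 < v)
    (hrich : IsRich f u v) (s w t : ℕ) (ht : 1 ≤ t) (hts : t ≤ s)
    (hcert : HasCertificates f s w t) :
    HasOneRectangle f (u / (s.choose t : ℝ)) (v / ((s.choose t : ℝ) * 2 ^ (w * t))) :=
  richness_for_certificates_general f u v hv hrich s w t hts hcert
end

section
/- Consider the lopsided set disjointness problem f on a universe U of size N·B (with N, B ≥ 1), where queries are the N-element subsets S ⊆ U, databases are arbitrary subsets T ⊆ U, and f(S,T) = 1 if and only if S ∩ T = ∅. For every integer M ≥ N: if A is a family of N-element subsets and B is a family of subsets of U such that S ∩ T = ∅ for every S ∈ A and T ∈ B, and |A| ≥ binom(M,N), then |B| ≤ 2^{N·B − M}. -/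
/-!
An `N`-set family of size at least `C(M, N)` must cover at least `M` points, since `N`-subsets of
fewer than `M` points number fewer than `C(M, N)`. Every database disjoint from all the queries
avoids these covered points, so there are at most `2 ^ (N·B - M)` such databases.
-/

open Finset

theorem Nat.choose_lt_choose_of_lt {m n k : ℕ} (hk : 0 < k) (hkn : k ≤ n) (hmn : m < n) :
    m.choose k < n.choose k := by
  obtain ⟨n, rfl⟩ : ∃ n', n = n' + 1 := ⟨n - 1, by omega⟩
  obtain ⟨k, rfl⟩ : ∃ k', k = k' + 1 := ⟨k - 1, by omega⟩
  calc m.choose (k + 1) ≤ n.choose (k + 1) := Nat.choose_le_choose _ (by omega)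
    _ < n.choose k + n.choose (k + 1) := Nat.lt_add_of_pos_left (Nat.choose_pos (by omega))
    _ = (n + 1).choose (k + 1) := (Nat.choose_succ_succ n k).symm

theorem Nat.le_of_choose_le_choose {m n k : ℕ} (hk : 0 < k) (hkn : k ≤ n)
    (h : n.choose k ≤ m.choose k) : n ≤ m := by
  by_contra! hmn
  exact (Nat.choose_lt_choose_of_lt hk hkn hmn).not_ge h

namespace Finset

variable {α : Type*} [DecidableEq α]

theorem card_le_choose_card_sup {𝒜 : Finset (Finset α)} {r : ℕ}
    (h𝒜 : (𝒜 : Set (Finset α)).Sized r) : #𝒜 ≤ (#(𝒜.sup id)).choose r := by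
  rw [← card_powersetCard]
  exact card_le_card fun S hS ↦ mem_powersetCard.2 ⟨le_sup (f := id) hS, h𝒜 hS⟩

theorem card_le_two_pow_card_compl_sup [Fintype α] {𝒜 ℬ : Finset (Finset α)}
    (h : ∀ S ∈ 𝒜, ∀ T ∈ ℬ, Disjoint S T) :
    #ℬ ≤ 2 ^ (Fintype.card α - #(𝒜.sup id)) := by
  rw [← card_compl, ← card_powerset]
  refine card_le_card fun T hT ↦ mem_powerset.2 (subset_compl_iff_disjoint_left.2 ?_)
  exact Finset.disjoint_sup_left.2 fun S hS ↦ h S hS T hT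

end Finset

theorem lsd_rectangle_bound_general (N B : ℕ) (hN : 1 ≤ N) (M : ℕ) (hM : N ≤ M)
    (𝒜 ℬ : Finset (Finset (Fin (N * B))))
    (h𝒜 : ∀ S ∈ 𝒜, S.card = N)
    (hone : ∀ S ∈ 𝒜, ∀ T ∈ ℬ, Disjoint S T)
    (hcard : M.choose N ≤ 𝒜.card) :
    (ℬ.card : ℝ) ≤ 2 ^ ((N * B : ℤ) - M) := by
  set s := 𝒜.sup id
  have hMs : M ≤ #s :=
    Nat.le_of_choose_le_choose hN hM (hcard.trans (card_le_choose_card_sup fun S hS ↦ h𝒜 S hS))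
  have hsNB : #s ≤ N * B := by simpa using card_le_univ s
  have hℬ : #ℬ ≤ 2 ^ (N * B - #s) := by simpa using card_le_two_pow_card_compl_sup hone
  calc (#ℬ : ℝ) ≤ 2 ^ (N * B - M) := by
        exact_mod_cast hℬ.trans (Nat.pow_le_pow_right two_pos (by omega))
    _ = 2 ^ ((N * B : ℤ) - M) := by
        rw [← zpow_natCast, Nat.cast_sub (hMs.trans hsNB), Nat.cast_mul]

/-- LSD rectangle bound: on a universe of size `N·B`, if `𝒜` is a family of `N`-element
subsets and `ℬ` a family of arbitrary subsets such that every `S ∈ 𝒜` is disjoint from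
every `T ∈ ℬ` (i.e. `𝒜 × ℬ` is a monochromatic 1-rectangle of lopsided set disjointness),
and `|𝒜| ≥ C(M,N)` for some `M ≥ N`, then `|ℬ| ≤ 2^{N·B − M}`. -/
theorem lsd_rectangle_bound (N B : ℕ) (hN : 1 ≤ N) (hB : 1 ≤ B) (M : ℕ) (hM : N ≤ M)
    (𝒜 ℬ : Finset (Finset (Fin (N * B))))
    (h𝒜 : ∀ S ∈ 𝒜, S.card = N)
    (hone : ∀ S ∈ 𝒜, ∀ T ∈ ℬ, Disjoint S T)
    (hcard : M.choose N ≤ 𝒜.card) :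
    (ℬ.card : ℝ) ≤ 2 ^ ((N * B : ℤ) - M) :=
  lsd_rectangle_bound_general N B hN M hM 𝒜 ℬ h𝒜 hone hcard
end
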